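/- arXiv:1309.2343 — 2 statements merged into one kernel-verified Lean document; each statement's English description precedes it below -/
import Mathlib

section
/- For all t > 0 and P > 0, the function f_P(t) = ln(2 e^{-(1+P)} (1+P)) - Pt/(1+P) + sqrt(1+4Pt) - ln(1 + sqrt(1+4Pt)) satisfies f_P(t) ≤ 0, with equality exactly at t = 1+P. -/
/-!
With `s = √(1 + 4Pt)` one has `Pt = (s² - 1)/4`, and in terms of `x = 2(1 + P)/(1 + s)`
the function becomes `f_P(t) = log x - (x - 1) - Pt/(1 + P) · (x - 1)²`. Both parts are
nonpositive since `log x ≤ x - 1`, with equality only at `x = 1`, i.e. `s = 1 + 2P`,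
i.e. `t = 1 + P`.
-/

open Real

/-- The function `f_P` arising in the bound on the Radon–Nikodym derivative of the
power-shell-induced output distribution against the capacity-achieving Gaussian output. -/
noncomputable def fP (P t : ℝ) : ℝ :=
  Real.log (2 * Real.exp (-(1 + P)) * (1 + P)) - P * t / (1 + P)
    + Real.sqrt (1 + 4 * P * t) - Real.log (1 + Real.sqrt (1 + 4 * P * t))

theorem log_sub_sub_one_sub_mul_sq_nonpos_and_eq_zero_iff {x c : ℝ} (hx : 0 < x) (hc : 0 ≤ c) :
    log x - (x - 1) - c * (x - 1) ^ 2 ≤ 0 ∧ (log x - (x - 1) - c * (x - 1) ^ 2 = 0 ↔ x = 1) := by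
  have hsq : 0 ≤ c * (x - 1) ^ 2 := by positivity
  refine ⟨by linarith [log_le_sub_one_of_pos hx], fun h => ?_, fun h => by simp [h]⟩
  by_contra hx1
  linarith [log_lt_sub_one_of_pos hx hx1]

theorem fP_eq_of_sq_eq {P t s : ℝ} (hP : 0 < 1 + P) (hs : 0 ≤ s) (hs2 : s ^ 2 = 1 + 4 * P * t) :
    fP P t = log (2 * (1 + P) / (1 + s)) - (2 * (1 + P) / (1 + s) - 1)
      - P * t / (1 + P) * (2 * (1 + P) / (1 + s) - 1) ^ 2 := by
  have hsqrt : √(1 + 4 * P * t) = s := by rw [← hs2, sqrt_sq hs]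
  have hs1 : 0 < 1 + s := by linarith
  have hPt : P * t = (s ^ 2 - 1) / 4 := by linarith
  rw [fP, hsqrt, log_mul (by positivity) hP.ne', log_mul two_ne_zero (exp_ne_zero _), log_exp,
    log_div (by positivity) hs1.ne', log_mul two_ne_zero hP.ne', hPt]
  field_simp
  ring

theorem eq_one_add_two_mul_iff_of_sq_eq {P t s : ℝ} (hP0 : P ≠ 0) (hP : 0 ≤ 1 + 2 * P) (hs : 0 ≤ s)
    (hs2 : s ^ 2 = 1 + 4 * P * t) : s = 1 + 2 * P ↔ t = 1 + P := by
  rw [← sq_eq_sq₀ hs hP, hs2, ← sub_eq_zero, ← sub_eq_zero (a := t),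
    show 1 + 4 * P * t - (1 + 2 * P) ^ 2 = 4 * P * (t - (1 + P)) by ring,
    mul_eq_zero, or_iff_right (mul_ne_zero four_ne_zero hP0)]

theorem fP_nonpos_and_eq_iff (P t : ℝ) (hP : 0 < P) (ht : 0 < t) :
    fP P t ≤ 0 ∧ (fP P t = 0 ↔ t = 1 + P) := by
  set s := √(1 + 4 * P * t)
  have hs : 0 ≤ s := sqrt_nonneg _
  have hs2 : s ^ 2 = 1 + 4 * P * t := sq_sqrt (by positivity)
  rw [fP_eq_of_sq_eq (by linarith) hs hs2,
    ← eq_one_add_two_mul_iff_of_sq_eq hP.ne' (by linarith) hs hs2]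
  obtain ⟨hle, heq⟩ := log_sub_sub_one_sub_mul_sq_nonpos_and_eq_zero_iff
    (by positivity : 0 < 2 * (1 + P) / (1 + s)) (by positivity : 0 ≤ P * t / (1 + P))
  refine ⟨hle, heq.trans ?_⟩
  rw [div_eq_one_iff_eq (by positivity)]
  constructor <;> intro h <;> linarith
end

section
/- Let P_{Y|X} be a Markov kernel from 𝒳 to 𝒴, P_X a probability measure on 𝒳, Q_Y a probability measure on 𝒴 such that each P_{Y|X=x} ≪ Q_Y, define i(x,y) = log (dP_{Y|X=x}/dQ_Y)(y), and let K := ess sup_{P_Y} dP_Y/dQ_Y < ∞ where P_Y is the induced output law. Then for any M ≥ 1 and threshold γ > 0, there exists a codebook of M points x(1),…,x(M) in 𝒳 and a decoder such that the average error probability ε satisfies ε ≤ (P_X ⊗ P_{Y|X})[i(X,Y) ≤ log γ] + K · ((M-1)/2) · (P_X ⊗ Q_Y)[i(X,Y) > log γ]. -/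
/-!
Random coding with a first-threshold-crossing decoder. Message `m` is decoded wrongly only if
its own codeword fails the threshold test (outage) or some earlier codeword `j < m` passes it
(confusion). For i.i.d. `P_X` codewords the union bound gives expected error `A + m B` for
message `m`, where `A` is the outage probability and `B` the probability that an independent
codeword passes the test on the output of `P_{Y|X}`; averaging over `m` gives `A + (M - 1) / 2 B`.
Since that output is distributed as `P_Y ≤ K Q_Y`, `B ≤ K (P_X ⊗ Q_Y)[i > log γ]`, and some
codebook does at least as well as the average.
-/

open MeasureTheory ProbabilityTheory ENNReal Finset

lemma measurePreserving_pi_eval_pair {X ι : Type*} [MeasurableSpace X] [Fintype ι]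
    (μ : Measure X) [IsProbabilityMeasure μ] {j m : ι} (hjm : j ≠ m) :
    MeasurePreserving (fun c : ι → X => (c j, c m)) (Measure.pi fun _ => μ) (μ.prod μ) := by
  have hind : (fun c : ι → X => c j) ⟂ᵢ[Measure.pi fun _ => μ] fun c => c m :=
    (iIndepFun_pi (X := fun _ => id) fun _ => aemeasurable_id).indepFun hjm
  refine ⟨by fun_prop, ?_⟩
  rw [(indepFun_iff_map_prod_eq_prod_map_map (measurable_pi_apply j).aemeasurable
      (measurable_pi_apply m).aemeasurable).mp hind,
    (measurePreserving_eval _ j).map_eq, (measurePreserving_eval _ m).map_eq]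

section RandomCoding

variable {X : Type*} [MeasurableSpace X] (μ : Measure X) [IsProbabilityMeasure μ] {M : ℕ}
  {a : X → ℝ≥0∞} {b : X → X → ℝ≥0∞}

lemma measurable_pi_pairwise (hb : Measurable (Function.uncurry b)) (j m : Fin M) :
    Measurable fun c : Fin M → X => b (c j) (c m) :=
  hb.comp (f := fun c : Fin M → X => (c j, c m)) (by fun_prop)

lemma measurable_pi_add_sum_pairwise (ha : Measurable a) (hb : Measurable (Function.uncurry b))
    (m : Fin M) :
    Measurable fun c : Fin M → X => a (c m) + ∑ j ∈ Iio m, b (c j) (c m) :=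
  (ha.comp (measurable_pi_apply m)).add <|
    Finset.measurable_sum _ fun j _ => measurable_pi_pairwise hb j m

theorem lintegral_pi_sum_pairwise (ha : Measurable a) (hb : Measurable (Function.uncurry b)) :
    ∫⁻ c, ∑ m : Fin M, (a (c m) + ∑ j ∈ Iio m, b (c j) (c m)) ∂(Measure.pi fun _ => μ)
      = ∑ m : Fin M, (∫⁻ x, a x ∂μ + m * ∫⁻ p, b p.1 p.2 ∂(μ.prod μ)) := by
  rw [lintegral_finsetSum _ fun m _ => measurable_pi_add_sum_pairwise ha hb m]
  refine sum_congr rfl fun m _ => ?_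
  rw [lintegral_add_left (f := fun c : Fin M → X => a (c m)) (ha.comp (measurable_pi_apply m)),
    lintegral_finsetSum _ fun j _ => measurable_pi_pairwise hb j m,
    (measurePreserving_eval _ m).lintegral_comp ha]
  congr 1
  calc ∑ j ∈ Iio m, ∫⁻ c, b (c j) (c m) ∂(Measure.pi fun _ => μ)
      = ∑ j ∈ Iio m, ∫⁻ p, b p.1 p.2 ∂(μ.prod μ) :=
        sum_congr rfl fun j hj =>
          (measurePreserving_pi_eval_pair μ (mem_Iio.mp hj).ne).lintegral_comp hb
    _ = m * ∫⁻ p, b p.1 p.2 ∂(μ.prod μ) := by rw [sum_const, Fin.card_Iio, nsmul_eq_mul]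

theorem exists_sum_pairwise_le (ha : Measurable a) (hb : Measurable (Function.uncurry b)) :
    ∃ c : Fin M → X, ∑ m : Fin M, (a (c m) + ∑ j ∈ Iio m, b (c j) (c m))
      ≤ ∑ m : Fin M, (∫⁻ x, a x ∂μ + m * ∫⁻ p, b p.1 p.2 ∂(μ.prod μ)) := by
  rw [← lintegral_pi_sum_pairwise μ ha hb]
  exact exists_le_lintegral (Finset.measurable_sum _ fun m _ =>
    measurable_pi_add_sum_pairwise ha hb m).aemeasurable

end RandomCoding

lemma ENNReal.sum_fin_natCast (M : ℕ) : ∑ m : Fin M, (m : ℝ≥0∞) = M * ((M - 1) / 2) := by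
  rw [← mul_div_assoc, ENNReal.eq_div_iff two_ne_zero ofNat_ne_top,
    Fin.sum_univ_eq_sum_range (fun m => (m : ℝ≥0∞)), ← Nat.cast_sum, ← Nat.cast_ofNat,
    ← Nat.cast_mul, mul_comm, sum_range_id_mul_two, Nat.cast_mul, ENNReal.natCast_sub,
    Nat.cast_one]

lemma ENNReal.inv_mul_sum_fin_add_mul {M : ℕ} (hM : M ≠ 0) (A B : ℝ≥0∞) :
    (M : ℝ≥0∞)⁻¹ * ∑ m : Fin M, (A + m * B) = A + (M - 1) / 2 * B := by
  rw [sum_add_distrib, sum_const, card_univ, Fintype.card_fin, nsmul_eq_mul, ← sum_mul,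
    ENNReal.sum_fin_natCast, mul_add, ← mul_assoc, ← mul_assoc, ← mul_assoc,
    ENNReal.inv_mul_cancel (Nat.cast_ne_zero.mpr hM) (natCast_ne_top M), one_mul, one_mul]

open Classical in
noncomputable def firstIndexDecoder {Y : Type*} {M : ℕ} (A : Fin M → Set Y) (d : Fin M)
    (y : Y) : Fin M :=
  if h : ∃ m, y ∈ A m then Fin.find (fun m => y ∈ A m) h else d

lemma setOf_firstIndexDecoder_ne_subset {Y : Type*} {M : ℕ} (A : Fin M → Set Y) (d m : Fin M) :
    {y | firstIndexDecoder A d y ≠ m} ⊆ (A m)ᶜ ∪ ⋃ j ∈ Iio m, A j := by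
  classical
  intro y hy
  by_cases hym : y ∈ A m
  · have h : ∃ k, y ∈ A k := ⟨m, hym⟩
    simp only [Set.mem_ofPred_eq, firstIndexDecoder, dif_pos h] at hy
    exact Or.inr (Set.mem_biUnion (mem_Iio.mpr ((Fin.find_le hym).lt_of_ne hy)) (Fin.find_spec h))
  · exact Or.inl hym

lemma measure_firstIndexDecoder_ne_le {Y : Type*} [MeasurableSpace Y] (μ : Measure Y) {M : ℕ}
    (A : Fin M → Set Y) (d m : Fin M) :
    μ {y | firstIndexDecoder A d y ≠ m} ≤ μ (A m)ᶜ + ∑ j ∈ Iio m, μ (A j) :=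
  (measure_mono (setOf_firstIndexDecoder_ne_subset A d m)).trans <|
    (measure_union_le _ _).trans (add_le_add le_rfl (measure_biUnion_finset_le _ _))

lemma MeasureTheory.Measure.measure_le_essSup_rnDeriv_mul {α : Type*} [MeasurableSpace α]
    {μ ν : Measure α} [μ.HaveLebesgueDecomposition ν] [SFinite ν] (h : μ ≪ ν)
    (s : Set α) :
    μ s ≤ essSup (μ.rnDeriv ν) ν * ν s := by
  rw [← Measure.setLIntegral_rnDeriv h s, ← setLIntegral_const]
  exact lintegral_mono_ae (ae_restrict_of_ae (ENNReal.ae_le_essSup _))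

lemma MeasureTheory.Measure.bind_absolutelyContinuous {α β : Type*} [MeasurableSpace α]
    [MeasurableSpace β] (μ : Measure α) {κ : Kernel α β} {ν : Measure β}
    (h : ∀ a, κ a ≪ ν) :
    μ.bind κ ≪ ν :=
  .mk fun s hs hs0 => by
    rw [Measure.bind_apply hs κ.aemeasurable, lintegral_congr fun a => h a hs0, lintegral_zero]

lemma ProbabilityTheory.Kernel.measurable_kernel_snd_preimage_prodMk {X Y Z : Type*}
    [MeasurableSpace X] [MeasurableSpace Y] [MeasurableSpace Z]
    (κ : Kernel X Y) [IsSFiniteKernel κ] {s : Set (Z × Y)} (hs : MeasurableSet s) :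
    Measurable fun p : Z × X => κ p.2 (Prod.mk p.1 ⁻¹' s) :=
  (Kernel.prodMkLeft Z κ).measurable_kernel_prodMk_left
    (measurable_fst.fst.prodMk measurable_snd hs)

lemma lintegral_prod_kernel_preimage_le {X Y : Type*} [MeasurableSpace X] [MeasurableSpace Y]
    (μ : Measure X) {ν : Measure X} [SFinite ν] {κ : Kernel X Y} [IsSFiniteKernel κ]
    {Q : Measure Y} [SigmaFinite (ν.bind κ)] [SigmaFinite Q] (hac : ν.bind κ ≪ Q)
    {s : Set (X × Y)} (hs : MeasurableSet s) :
    ∫⁻ p, κ p.2 (Prod.mk p.1 ⁻¹' s) ∂(μ.prod ν)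
      ≤ essSup ((ν.bind κ).rnDeriv Q) Q * (μ.prod Q) s := by
  calc ∫⁻ p, κ p.2 (Prod.mk p.1 ⁻¹' s) ∂(μ.prod ν)
      = ∫⁻ x, (ν.bind κ) (Prod.mk x ⁻¹' s) ∂μ := by
        rw [lintegral_prod _ (κ.measurable_kernel_snd_preimage_prodMk hs).aemeasurable]
        exact lintegral_congr fun x =>
          (Measure.bind_apply (measurable_prodMk_left hs) κ.aemeasurable).symm
    _ ≤ ∫⁻ x, essSup ((ν.bind κ).rnDeriv Q) Q * Q (Prod.mk x ⁻¹' s) ∂μ :=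
        lintegral_mono fun x => Measure.measure_le_essSup_rnDeriv_mul hac _
    _ = essSup ((ν.bind κ).rnDeriv Q) Q * (μ.prod Q) s := by
        rw [lintegral_const_mul _ (measurable_measure_prodMk_left hs), Measure.prod_apply hs]

theorem modified_DT_achievability_general {X Y : Type*} [MeasurableSpace X] [MeasurableSpace Y]
    (κ : Kernel X Y) [IsMarkovKernel κ]
    (PX : Measure X) [IsProbabilityMeasure PX]
    (QY : Measure Y) [IsProbabilityMeasure QY]
    (hac : ∀ x, κ x ≪ QY)
    (i : X → Y → ℝ)
    (K : ℝ≥0∞) (hK : K = essSup ((PX.bind κ).rnDeriv QY) QY)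
    (M : ℕ) (hM : 1 ≤ M) (γ : ℝ) :
    ∃ (enc : Fin M → X) (dec : Y → Fin M),
      (M : ℝ≥0∞)⁻¹ * ∑ m : Fin M, (κ (enc m)) {y | dec y ≠ m} ≤
        (PX ⊗ₘ κ) {p : X × Y | i p.1 p.2 ≤ Real.log γ}
          + K * (((M : ℝ≥0∞) - 1) / 2)
            * (PX.prod QY) {p : X × Y | Real.log γ < i p.1 p.2} := by
  subst hK
  -- `i` is arbitrary, so the threshold events are replaced by measurable hulls.
  set T := toMeasurable (PX ⊗ₘ κ) {p : X × Y | i p.1 p.2 ≤ Real.log γ}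
  set T' := toMeasurable (PX.prod QY) {p : X × Y | Real.log γ < i p.1 p.2}
  have hT : MeasurableSet T := measurableSet_toMeasurable _ _
  have hT' : MeasurableSet T' := measurableSet_toMeasurable _ _
  have : IsProbabilityMeasure (PX.bind κ) :=
    isProbabilityMeasure_bind κ.aemeasurable (ae_of_all _ fun _ => inferInstance)
  obtain ⟨c, hc⟩ := exists_sum_pairwise_le PX (M := M) (a := fun x => κ x (Prod.mk x ⁻¹' T))
    (b := fun x x' => κ x' (Prod.mk x ⁻¹' T')) (κ.measurable_kernel_prodMk_left hT)
    (κ.measurable_kernel_snd_preimage_prodMk hT')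
  refine ⟨c, firstIndexDecoder (fun m => {y | Real.log γ < i (c m) y}) ⟨0, hM⟩, ?_⟩
  calc _ ≤ (M : ℝ≥0∞)⁻¹ * ∑ m : Fin M, (κ (c m) (Prod.mk (c m) ⁻¹' T)
          + ∑ j ∈ Iio m, κ (c m) (Prod.mk (c j) ⁻¹' T')) := by
        gcongr with m
        refine (measure_firstIndexDecoder_ne_le _ _ _ m).trans (add_le_add ?_ ?_)
        · exact measure_mono fun y hy =>
            subset_toMeasurable _ _ (show i (c m) y ≤ Real.log γ from not_lt.mp hy)
        · exact sum_le_sum fun j _ => measure_mono fun y hy => subset_toMeasurable _ _ hy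
    _ ≤ (M : ℝ≥0∞)⁻¹ * ∑ m : Fin M, (∫⁻ x, κ x (Prod.mk x ⁻¹' T) ∂PX
          + m * ∫⁻ p, κ p.2 (Prod.mk p.1 ⁻¹' T') ∂(PX.prod PX)) := by gcongr
    _ = ∫⁻ x, κ x (Prod.mk x ⁻¹' T) ∂PX
          + (M - 1) / 2 * ∫⁻ p, κ p.2 (Prod.mk p.1 ⁻¹' T') ∂(PX.prod PX) :=
        ENNReal.inv_mul_sum_fin_add_mul (by omega) _ _
    _ ≤ (PX ⊗ₘ κ) T
          + (M - 1) / 2 * (essSup ((PX.bind κ).rnDeriv QY) QY * (PX.prod QY) T') := by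
        rw [Measure.compProd_apply hT]
        gcongr
        exact lintegral_prod_kernel_preimage_le PX (Measure.bind_absolutelyContinuous PX hac) hT'
    _ = _ := by rw [measure_toMeasurable, measure_toMeasurable]; ring

/-- Modified dependence-testing achievability bound with change of measure
(Theorem 1 of the paper, without cost constraint).  The decoder outputs the first
codeword index whose modified information density with the output exceeds `log γ`;
there exists a codebook of `M` codewords whose average error probability is bounded
by the outage probability plus `K (M-1)/2` times the confusion probability. -/
theorem modified_DT_achievability {X Y : Type*} [MeasurableSpace X] [MeasurableSpace Y]
    (κ : Kernel X Y) [IsMarkovKernel κ]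
    (PX : Measure X) [IsProbabilityMeasure PX]
    (QY : Measure Y) [IsProbabilityMeasure QY]
    (hac : ∀ x, κ x ≪ QY)
    (i : X → Y → ℝ) (hi : ∀ x y, i x y = Real.log (((κ x).rnDeriv QY y).toReal))
    (K : ℝ≥0∞) (hK : K = essSup ((PX.bind κ).rnDeriv QY) QY) (hKfin : K ≠ ⊤)
    (M : ℕ) (hM : 1 ≤ M) (γ : ℝ) (hγ : 0 < γ) :
    ∃ (enc : Fin M → X) (dec : Y → Fin M),
      (M : ℝ≥0∞)⁻¹ * ∑ m : Fin M, (κ (enc m)) {y | dec y ≠ m} ≤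
        (PX ⊗ₘ κ) {p : X × Y | i p.1 p.2 ≤ Real.log γ}
          + K * (((M : ℝ≥0∞) - 1) / 2)
            * (PX.prod QY) {p : X × Y | Real.log γ < i p.1 p.2} :=
  modified_DT_achievability_general κ PX QY hac i K hK M hM γ
end
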